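/- arXiv:1909.13752 — 3 statements merged into one kernel-verified Lean document; each statement's English description precedes it below -/
import Mathlib

section
/- Let u be a nonzero linear functional on the space 𝒫 of complex polynomials satisfying the distributional equation D(φu) = ψu, where φ(x) = ax² + bx + c has degree at most 2, ψ(x) = dx + e has degree at most 1, and at least one of φ, ψ is not the zero polynomial. Set d_n := d + an and e_n := e + bn for n ≥ 0. Then u is regular if and only if d_n ≠ 0 and φ(−e_n/d_{2n}) ≠ 0 for every integer n ≥ 0. -/
/-!
Pearson's equation `D(φu) = ψu` gives `D(Q φ^(m+1) u) = (φ Q' + (ψ + m φ') Q) φ^m u`;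
iterating, `D^n(φ^n u) = R_n u` for a polynomial `R_n` of degree at most `n` whose
`X^n`-coefficient is `λ_n = d_{n-1} d_n ⋯ d_{2n-2}`. Tested against `g` of degree at most `n`
this is the Rodrigues formula `⟨u, R_n g⟩ = (-1)^n n! g_n ⟨u, φ^n⟩`. Testing Pearson's equation
against suitable multiples of `φ^n` gives the moment recurrence
`d_{2n} d_{2n+1} ⟨u, φ^(n+1)⟩ = d_{2n}² φ(-e_n/d_{2n}) ⟨u, φ^n⟩`.

If all `d_n` and `φ(-e_n/d_{2n})` are nonzero, `u` vanishes on `R_n` for `n ≥ 1`, so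
`⟨u, 1⟩ ≠ 0`; the recurrence keeps every `⟨u, φ^n⟩` nonzero, and the `R_n / λ_n` are the monic
OPS. Conversely, for regular `u` the Rodrigues formula shows `⟨u, φ^n⟩ = 0 ↔ λ_n = 0`. If `d_{2n}`
is the first vanishing `d_j`, then `e_n = 0`, so `ψ + nφ' = 0` and `φ^(n+1) u` annihilates all
derivatives, forcing `φ = ψ = 0`. If it is `d_{2n+1}`, then `a ≠ 0` and no other `d_j` vanishes,
so `λ_{2n+2} = 0 ≠ λ_{2n+3}`, which the recurrence at `2n+2` forbids. Finally, once all moments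
`⟨u, φ^n⟩` are nonzero, the recurrence gives `φ(-e_n/d_{2n}) ≠ 0`.
-/

open Polynomial

noncomputable section

namespace HahnOPSPaper

/-- The algebraic dual of the space of complex polynomials. -/
abbrev PDual : Type := Module.Dual ℂ (Polynomial ℂ)

/-- Left multiplication of a functional by a polynomial: `⟨φu, f⟩ = ⟨u, φf⟩`. -/
def pMul (φ : Polynomial ℂ) (u : PDual) : PDual := u ∘ₗ LinearMap.mulLeft ℂ φ

/-- Distributional derivative: `⟨Du, f⟩ = -⟨u, f'⟩`. -/
def dDeriv (u : PDual) : PDual :=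
  -(u ∘ₗ (Polynomial.derivative : Polynomial ℂ →ₗ[ℂ] Polynomial ℂ))

/-- The q-bracket `[n]_q = 1 + q + ⋯ + q^(n-1)`. -/
def qBracket (q : ℂ) (n : ℕ) : ℂ := ∑ i ∈ Finset.range n, q ^ i

/-- q-factorial `[n]_q!`. -/
def qFact (q : ℂ) (n : ℕ) : ℂ := ∏ i ∈ Finset.range n, qBracket q (i + 1)

/-- `D` is Hahn's operator `D_{q,ω}`, i.e. the (unique, for `(q,ω) ≠ (1,0)`) linear operator
with `((q-1)x + ω)·(Df)(x) = f(qx+ω) - f(x)`. -/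
def IsHahn (q ω : ℂ) (D : Polynomial ℂ →ₗ[ℂ] Polynomial ℂ) : Prop :=
  ∀ f : Polynomial ℂ, (C (q - 1) * X + C ω) * D f = f.comp (C q * X + C ω) - f

/-- The operator `(L_{q,ω} f)(x) = f(qx + ω)`. -/
def Lop (q ω : ℂ) : Polynomial ℂ →ₗ[ℂ] Polynomial ℂ :=
  (aeval (C q * X + C ω)).toLinearMap

/-- The distributional Hahn operator `D_{q,ω}` on the dual, built from the ordinary operator
`D*_{q,ω} = D_{1/q,-ω/q}`: `⟨D_{q,ω}u, f⟩ = -q⁻¹·⟨u, D*_{q,ω}f⟩`. -/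
def hahnDual (q : ℂ) (Dstar : Polynomial ℂ →ₗ[ℂ] Polynomial ℂ) (u : PDual) : PDual :=
  (-q⁻¹) • (u ∘ₗ Dstar)

/-- The distributional operator `L_{q,ω}`: `⟨L_{q,ω}u, f⟩ = q⁻¹·⟨u, L_{1/q,-ω/q}f⟩`. -/
def LDual (q ω : ℂ) (u : PDual) : PDual := q⁻¹ • (u ∘ₗ Lop q⁻¹ (-ω / q))

/-- A functional is regular if it admits a monic orthogonal polynomial sequence. -/
def IsRegularFunc (u : PDual) : Prop :=
  ∃ P : ℕ → Polynomial ℂ, (∀ n, (P n).Monic ∧ (P n).natDegree = n) ∧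
    (∀ m n, m ≠ n → u (P m * P n) = 0) ∧ (∀ n, u (P n ^ 2) ≠ 0)

/-- `P` is the monic OPS with respect to `u`. -/
def IsMonicOPS (u : PDual) (P : ℕ → Polynomial ℂ) : Prop :=
  (∀ n, (P n).Monic ∧ (P n).natDegree = n) ∧
    (∀ m n, m ≠ n → u (P m * P n) = 0) ∧ (∀ n, u (P n ^ 2) ≠ 0)

/-- Continuous case: `d_n = d + a·n`. -/
def ddC (a d : ℂ) (n : ℕ) : ℂ := d + a * n

/-- Continuous case: `e_n = e + b·n`. -/
def eeC (b e : ℂ) (n : ℕ) : ℂ := e + b * n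

/-- Continuous case: `β_n = n·e_{n-1}/d_{2n-2} - (n+1)·e_n/d_{2n}`. -/
def betaC (a b d e : ℂ) (n : ℕ) : ℂ :=
  n * eeC b e (n - 1) / ddC a d (2 * n - 2) - (n + 1) * eeC b e n / ddC a d (2 * n)

/-- Continuous case: `γ_{n+1} = -((n+1)·d_{n-1}/(d_{2n-1}·d_{2n+1}))·φ(-e_n/d_{2n})`. -/
def gammaC (a b d e : ℂ) (φ : Polynomial ℂ) (n : ℕ) : ℂ :=
  -((n + 1) * ddC a d (n - 1) / (ddC a d (2 * n - 1) * ddC a d (2 * n + 1))) *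
    φ.eval (-(eeC b e n) / ddC a d (2 * n))

/-- `d_n = d·q^n + a·[n]_q`. -/
def ddQ (q a d : ℂ) (n : ℕ) : ℂ := d * q ^ n + a * qBracket q n

/-- `e_n = e·q^n + (ω·d_n + b)·[n]_q`. -/
def eeQ (q ω a b d e : ℂ) (n : ℕ) : ℂ :=
  e * q ^ n + (ω * ddQ q a d n + b) * qBracket q n

/-- `β_n = ω[n]_q + [n]_q·e_{n-1}/d_{2n-2} - [n+1]_q·e_n/d_{2n}`. -/
def betaQ (q ω a b d e : ℂ) (n : ℕ) : ℂ :=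
  ω * qBracket q n + qBracket q n * eeQ q ω a b d e (n - 1) / ddQ q a d (2 * n - 2)
    - qBracket q (n + 1) * eeQ q ω a b d e n / ddQ q a d (2 * n)

/-- `γ_{n+1} = -(q^n·[n+1]_q·d_{n-1}/(d_{2n-1}·d_{2n+1}))·φ(-e_n/d_{2n})`. -/
def gammaQ (q ω a b d e : ℂ) (φ : Polynomial ℂ) (n : ℕ) : ℂ :=
  -(q ^ n * qBracket q (n + 1) * ddQ q a d (n - 1) /
      (ddQ q a d (2 * n - 1) * ddQ q a d (2 * n + 1))) *
    φ.eval (-(eeQ q ω a b d e n) / ddQ q a d (2 * n))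

/-- `Φ(x;n) = ∏_{j=1}^n φ(q^j x + ω[j]_q)`. -/
def PhiQ (q ω : ℂ) (φ : Polynomial ℂ) (n : ℕ) : Polynomial ℂ :=
  ∏ j ∈ Finset.range n, φ.comp (C (q ^ (j + 1)) * X + C (ω * qBracket q (j + 1)))

/-- `k_n = q^{n(n-3)/2}·∏_{j=0}^{n-1} d_{n+j-1}⁻¹`. -/
def kQ (q a d : ℂ) (n : ℕ) : ℂ :=
  q ^ (((n : ℤ) * ((n : ℤ) - 3)) / 2) * ∏ j ∈ Finset.range n, (ddQ q a d (n + j - 1))⁻¹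


section Derivative

variable {R : Type*} [CommSemiring R]

lemma mul_derivative_pow (p : R[X]) (m : ℕ) :
    p * derivative (p ^ m) = C (m : R) * derivative p * p ^ m := by
  cases m with
  | zero => simp
  | succ m => rw [derivative_pow_succ]; push_cast; ring

lemma iterate_derivative_eq_C_of_natDegree_le {g : R[X]} {n : ℕ} (hg : g.natDegree ≤ n) :
    derivative^[n] g = C (n.factorial * g.coeff n) := by
  rw [eq_C_of_natDegree_le_zero ((natDegree_iterate_derivative g n).trans (by omega)),
    coeff_iterate_derivative, zero_add, Nat.descFactorial_self, nsmul_eq_mul]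

end Derivative

section MonicFamily

variable {R M : Type*} [CommRing R] [AddCommGroup M] [Module R M] {P : ℕ → R[X]}

lemma degree_sub_C_mul_lt {p f : R[X]} {n : ℕ} (hp : p.Monic) (hpn : p.natDegree = n)
    (hf : f.degree ≤ n) : (f - C (f.coeff n) * p).degree < n := by
  refine (degree_lt_iff_coeff_zero _ _).mpr fun k hk => ?_
  rcases (Nat.cast_le.mp hk).eq_or_lt with rfl | hlt
  · simp [← hpn, hp.coeff_natDegree]
  · have hfk : f.coeff k = 0 := coeff_eq_zero_of_degree_lt (hf.trans_lt (by exact_mod_cast hlt))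
    have hpk : p.coeff k = 0 := coeff_eq_zero_of_natDegree_lt (hpn ▸ hlt)
    simp [hfk, hpk]

lemma map_eq_zero_of_degree_lt (hP : ∀ k, (P k).Monic ∧ (P k).natDegree = k)
    (ℓ : R[X] →ₗ[R] M) {n : ℕ} (hℓ : ∀ k < n, ℓ (P k) = 0) {f : R[X]} (hf : f.degree < n) :
    ℓ f = 0 := by
  induction n generalizing f with
  | zero => simp [degree_eq_bot.mp (Nat.WithBot.lt_zero_iff.mp (by exact_mod_cast hf))]
  | succ n ih =>
    have hfn : f.degree ≤ n := Order.le_of_lt_succ (by exact_mod_cast hf)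
    have hrest := ih (fun k hk => hℓ k (by omega))
      (degree_sub_C_mul_lt (hP n).1 (hP n).2 hfn)
    rw [map_sub, C_mul', map_smul, hℓ n n.lt_succ_self, smul_zero, sub_zero] at hrest
    exact hrest

lemma eq_zero_of_map_eq_zero (hP : ∀ k, (P k).Monic ∧ (P k).natDegree = k)
    (ℓ : R[X] →ₗ[R] M) (hℓ : ∀ k, ℓ (P k) = 0) : ℓ = 0 :=
  LinearMap.ext fun f => map_eq_zero_of_degree_lt hP ℓ (fun k _ => hℓ k)
    (f.degree_le_natDegree.trans_lt (by exact_mod_cast f.natDegree.lt_succ_self))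

end MonicFamily

@[simp]
lemma pMul_apply (p : ℂ[X]) (v : PDual) (f : ℂ[X]) : pMul p v f = v (p * f) := rfl

@[simp]
lemma dDeriv_apply (v : PDual) (f : ℂ[X]) : dDeriv v f = -v (derivative f) := rfl

lemma apply_C_mul (v : PDual) (r : ℂ) (f : ℂ[X]) : v (C r * f) = r * v f := by
  rw [C_mul', map_smul, smul_eq_mul]

lemma iterate_dDeriv_apply (v : PDual) (k : ℕ) (f : ℂ[X]) :
    (dDeriv^[k] v) f = (-1) ^ k * v (derivative^[k] f) := by
  induction k generalizing f with
  | zero => simp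
  | succ k ih =>
    rw [Function.iterate_succ_apply', dDeriv_apply, ih, Function.iterate_succ_apply]
    ring

section Rodrigues

variable {φ ψ : ℂ[X]} {u : PDual}

def rodriguesStep (φ ψ : ℂ[X]) (m : ℕ) (Q : ℂ[X]) : ℂ[X] :=
  φ * derivative Q + (ψ + C (m : ℂ) * derivative φ) * Q

/-- `D^k (φ^n u) = rodriguesSeq φ ψ n k · φ^(n-k) u` for `k ≤ n`. -/
def rodriguesSeq (φ ψ : ℂ[X]) (n : ℕ) : ℕ → ℂ[X]
  | 0 => 1
  | k + 1 => rodriguesStep φ ψ (n - (k + 1)) (rodriguesSeq φ ψ n k)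

def rodrigues (φ ψ : ℂ[X]) (n : ℕ) : ℂ[X] := rodriguesSeq φ ψ n n

lemma dDeriv_pMul_mul_pow_succ (heq : dDeriv (pMul φ u) = pMul ψ u) (Q : ℂ[X]) (m : ℕ) :
    dDeriv (pMul (Q * φ ^ (m + 1)) u) = pMul (rodriguesStep φ ψ m Q * φ ^ m) u := by
  refine LinearMap.ext fun f => ?_
  have hpearson := LinearMap.congr_fun heq (Q * φ ^ m * f)
  have hpoly : rodriguesStep φ ψ m Q * φ ^ m * f
      = ψ * (Q * φ ^ m * f) + φ * derivative (Q * φ ^ m * f)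
        - Q * φ ^ (m + 1) * derivative f := by
    simp only [rodriguesStep, derivative_mul]
    linear_combination -(Q * f) * mul_derivative_pow φ m
  simp only [dDeriv_apply, pMul_apply] at hpearson ⊢
  rw [hpoly, map_sub, map_add]
  linear_combination hpearson

lemma apply_pow_succ_mul_derivative (heq : dDeriv (pMul φ u) = pMul ψ u) (m : ℕ) (g : ℂ[X]) :
    u (φ ^ (m + 1) * derivative g) = -u ((ψ + C (m : ℂ) * derivative φ) * φ ^ m * g) := by
  have h := LinearMap.congr_fun (dDeriv_pMul_mul_pow_succ heq 1 m) g
  simp only [dDeriv_apply, pMul_apply, rodriguesStep, derivative_one, mul_zero, zero_add,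
    mul_one, one_mul] at h
  linear_combination -h

lemma iterate_dDeriv_pMul_pow (heq : dDeriv (pMul φ u) = pMul ψ u) {n k : ℕ} (hk : k ≤ n) :
    dDeriv^[k] (pMul (φ ^ n) u) = pMul (rodriguesSeq φ ψ n k * φ ^ (n - k)) u := by
  induction k with
  | zero => simp [rodriguesSeq]
  | succ k ih =>
    rw [Function.iterate_succ_apply', ih (by omega), show n - k = n - (k + 1) + 1 by omega,
      dDeriv_pMul_mul_pow_succ heq]
    rfl

lemma apply_rodrigues_mul (heq : dDeriv (pMul φ u) = pMul ψ u) {n : ℕ} {g : ℂ[X]}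
    (hg : g.natDegree ≤ n) :
    u (rodrigues φ ψ n * g) = (-1) ^ n * n.factorial * g.coeff n * u (φ ^ n) := by
  have h := LinearMap.congr_fun (iterate_dDeriv_pMul_pow heq (le_refl n)) g
  rw [Nat.sub_self, pow_zero, mul_one, iterate_dDeriv_apply,
    iterate_derivative_eq_C_of_natDegree_le hg] at h
  simp only [pMul_apply, mul_comm (φ ^ n), apply_C_mul] at h
  rw [rodrigues, ← h]
  ring

end Rodrigues

section Quadratic

variable {a b c d e : ℂ} {φ ψ : ℂ[X]} {u : PDual}

lemma natDegree_rodriguesStep_le (hφ : φ.natDegree ≤ 2) (hψ : ψ.natDegree ≤ 1) {Q : ℂ[X]}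
    {k : ℕ} (hQ : Q.natDegree ≤ k) (m : ℕ) : (rodriguesStep φ ψ m Q).natDegree ≤ k + 1 := by
  have hQ' : (derivative Q).natDegree ≤ k - 1 := (natDegree_derivative_le Q).trans (by omega)
  have hφ' : (derivative φ).natDegree ≤ 1 := (natDegree_derivative_le φ).trans (by omega)
  have hlin : (ψ + C (m : ℂ) * derivative φ).natDegree ≤ 1 :=
    natDegree_add_le_of_degree_le hψ ((natDegree_C_mul_le _ _).trans hφ')
  have hfirst : (φ * derivative Q).natDegree ≤ k + 1 := by
    rcases Nat.eq_zero_or_pos k with rfl | hk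
    · simp [derivative_of_natDegree_zero (Nat.le_zero.mp hQ)]
    · exact natDegree_mul_le_of_le hφ hQ' |>.trans (by omega)
  exact natDegree_add_le_of_degree_le hfirst
    (natDegree_mul_le_of_le hlin hQ |>.trans (by omega))

lemma natDegree_rodriguesSeq_le (hφ : φ.natDegree ≤ 2) (hψ : ψ.natDegree ≤ 1) (n k : ℕ) :
    (rodriguesSeq φ ψ n k).natDegree ≤ k := by
  induction k with
  | zero => simp [rodriguesSeq]
  | succ k ih => exact natDegree_rodriguesStep_le hφ hψ ih _

lemma coeff_rodriguesStep (hφ : φ = C a * X ^ 2 + C b * X + C c) (hψ : ψ = C d * X + C e)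
    {Q : ℂ[X]} {k : ℕ} (hQ : Q.natDegree ≤ k) (m : ℕ) :
    (rodriguesStep φ ψ m Q).coeff (k + 1) = ddC a d (k + 2 * m) * Q.coeff k := by
  have hQ1 : Q.coeff (k + 1) = 0 := coeff_eq_zero_of_natDegree_lt (by omega)
  have hQ2 : Q.coeff (k + 2) = 0 := coeff_eq_zero_of_natDegree_lt (by omega)
  have hX2 : (X ^ 2 * derivative Q).coeff (k + 1) = k * Q.coeff k := by
    rcases k with _ | k
    · simp [coeff_X_pow_mul']
    · rw [coeff_X_pow_mul, coeff_derivative]; push_cast; ring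
  have hsplit : rodriguesStep φ ψ m Q
      = C a * (X ^ 2 * derivative Q) + C b * (X * derivative Q) + C c * derivative Q
        + C (d + 2 * a * m) * (X * Q) + C (e + b * m) * Q := by
    subst hφ hψ
    simp only [rodriguesStep, derivative_C_mul_X_pow, derivative_C_mul_X,
      derivative_C, map_add, map_mul, map_natCast, map_ofNat]
    push_cast
    ring
  simp only [hsplit, coeff_add, coeff_C_mul, hX2, coeff_X_mul, coeff_derivative, hQ1, hQ2, ddC]
  push_cast
  ring

/-- At `k = n` this is `d_{n-1} ⋯ d_{2n-2}`. -/
def rodriguesCoeff (a d : ℂ) (n k : ℕ) : ℂ := ∏ i ∈ Finset.range k, ddC a d (i + 2 * (n - (i + 1)))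

lemma coeff_rodriguesSeq (hφ : φ = C a * X ^ 2 + C b * X + C c) (hψ : ψ = C d * X + C e)
    (n k : ℕ) : (rodriguesSeq φ ψ n k).coeff k = rodriguesCoeff a d n k := by
  have hφd : φ.natDegree ≤ 2 := hφ ▸ natDegree_quadratic_le
  have hψd : ψ.natDegree ≤ 1 := hψ ▸ natDegree_linear_le
  induction k with
  | zero => simp [rodriguesSeq, rodriguesCoeff]
  | succ k ih =>
    rw [rodriguesSeq, coeff_rodriguesStep hφ hψ (natDegree_rodriguesSeq_le hφd hψd n k), ih,
      rodriguesCoeff, rodriguesCoeff, Finset.prod_range_succ, mul_comm]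

lemma rodriguesCoeff_ne_zero (hd : ∀ j, ddC a d j ≠ 0) (n k : ℕ) : rodriguesCoeff a d n k ≠ 0 :=
  Finset.prod_ne_zero_iff.mpr fun _ _ => hd _

lemma add_C_mul_derivative_eq (hφ : φ = C a * X ^ 2 + C b * X + C c) (hψ : ψ = C d * X + C e)
    (n : ℕ) : ψ + C (n : ℂ) * derivative φ = C (ddC a d (2 * n)) * X + C (eeC b e n) := by
  subst hφ hψ
  simp only [ddC, eeC, derivative_add, derivative_C_mul_X_pow, derivative_C_mul_X, derivative_C]
  simp only [map_add, map_mul, map_natCast, map_ofNat, Nat.cast_mul, Nat.cast_ofNat]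
  ring

lemma apply_linear_mul_pow_eq_zero (hφ : φ = C a * X ^ 2 + C b * X + C c) (hψ : ψ = C d * X + C e)
    (heq : dDeriv (pMul φ u) = pMul ψ u) (n : ℕ) :
    ddC a d (2 * n) * u (X * φ ^ n) + eeC b e n * u (φ ^ n) = 0 := by
  have h := apply_pow_succ_mul_derivative heq n 1
  rw [derivative_one, mul_zero, map_zero, mul_one, add_C_mul_derivative_eq hφ hψ, add_mul,
    map_add, mul_assoc, apply_C_mul, apply_C_mul] at h
  linear_combination h

/-- Pearson's equation tested against `φ ^ n (a d_{2n} X + b d_{2n} - a e_n)`, combined with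
`d_{2n}² φ = (d_{2n} X + e_n) (a d_{2n} X + b d_{2n} - a e_n) + d_{2n}² φ(-e_n/d_{2n})`. -/
lemma apply_pow_succ_recurrence (hφ : φ = C a * X ^ 2 + C b * X + C c)
    (hψ : ψ = C d * X + C e) (heq : dDeriv (pMul φ u) = pMul ψ u) (n : ℕ)
    (hD : ddC a d (2 * n) ≠ 0) :
    ddC a d (2 * n) * ddC a d (2 * n + 1) * u (φ ^ (n + 1))
      = ddC a d (2 * n) ^ 2 * φ.eval (-eeC b e n / ddC a d (2 * n)) * u (φ ^ n) := by
  set D := ddC a d (2 * n)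
  set E := eeC b e n
  have hval : D ^ 2 * φ.eval (-E / D) = a * E ^ 2 - b * E * D + c * D ^ 2 := by
    subst hφ
    simp only [eval_add, eval_mul, eval_pow, eval_C, eval_X]
    field_simp
    ring
  have hpoly : C (D ^ 2) * φ ^ (n + 1)
      = (C D * X + C E) * φ ^ n * (C (a * D) * X + C (b * D - a * E))
        + C (D ^ 2 * φ.eval (-E / D)) * φ ^ n := by
    rw [hval, hφ]
    simp only [map_add, map_sub, map_mul, map_pow]
    ring
  have hpearson : u (φ ^ (n + 1) * derivative (C (a * D) * X + C (b * D - a * E)))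
      = -u ((C D * X + C E) * φ ^ n * (C (a * D) * X + C (b * D - a * E))) := by
    rw [apply_pow_succ_mul_derivative heq, add_C_mul_derivative_eq hφ hψ]
  have happly := congrArg u hpoly
  simp only [derivative_C_mul_X, derivative_C, add_zero, mul_comm (φ ^ (n + 1)),
    map_add, apply_C_mul] at hpearson happly
  have hD1 : ddC a d (2 * n + 1) = D + a := by simp only [D, ddC]; push_cast; ring
  rw [hD1]
  linear_combination happly + hpearson

end Quadratic

namespace IsMonicOPS

variable {a b c d e : ℂ} {φ ψ : ℂ[X]} {u : PDual} {P : ℕ → ℂ[X]}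

lemma apply_mul_eq_zero_of_degree_lt (hP : IsMonicOPS u P) {f : ℂ[X]} {n : ℕ}
    (hf : f.degree < n) : u (f * P n) = 0 :=
  map_eq_zero_of_degree_lt hP.1 (u ∘ₗ LinearMap.mulRight ℂ (P n))
    (fun k hk => hP.2.1 k n hk.ne) hf

lemma apply_mul_eq_coeff_mul (hP : IsMonicOPS u P) {f : ℂ[X]} {n : ℕ} (hf : f.degree ≤ n) :
    u (f * P n) = f.coeff n * u (P n ^ 2) := by
  have hrest := hP.apply_mul_eq_zero_of_degree_lt (degree_sub_C_mul_lt (hP.1 n).1 (hP.1 n).2 hf)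
  rw [sub_mul, map_sub, mul_assoc, apply_C_mul, sub_eq_zero] at hrest
  rw [hrest, sq]

lemma eq_zero_of_apply_mul_eq_zero (hP : IsMonicOPS u P) {f : ℂ[X]}
    (h : ∀ g : ℂ[X], g.natDegree ≤ f.natDegree → u (g * f) = 0) : f = 0 := by
  by_contra hf
  have hlead := hP.apply_mul_eq_coeff_mul f.degree_le_natDegree
  rw [mul_comm, h _ (hP.1 _).2.le] at hlead
  exact mul_ne_zero (leadingCoeff_ne_zero.mpr hf) (hP.2.2 _) hlead.symm


lemma apply_pow_eq_zero_iff (hP : IsMonicOPS u P) (hφ : φ = C a * X ^ 2 + C b * X + C c)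
    (hψ : ψ = C d * X + C e) (heq : dDeriv (pMul φ u) = pMul ψ u) (n : ℕ) :
    u (φ ^ n) = 0 ↔ rodriguesCoeff a d n n = 0 := by
  have hdeg : (rodrigues φ ψ n).natDegree ≤ n :=
    natDegree_rodriguesSeq_le (hφ ▸ natDegree_quadratic_le) (hψ ▸ natDegree_linear_le) n n
  have hcoeff : (rodrigues φ ψ n).coeff n = rodriguesCoeff a d n n := coeff_rodriguesSeq hφ hψ n n
  have hR : ∀ g : ℂ[X], g.natDegree ≤ n →
      u (g * rodrigues φ ψ n) = (-1) ^ n * n.factorial * g.coeff n * u (φ ^ n) := fun g hg => by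
    rw [mul_comm]; exact apply_rodrigues_mul heq hg
  constructor
  · intro h
    rw [← hcoeff, hP.eq_zero_of_apply_mul_eq_zero (f := rodrigues φ ψ n) fun g hg => by
      rw [hR g (hg.trans hdeg), h, mul_zero],
      coeff_zero]
  · intro h
    have hR0 : rodrigues φ ψ n = 0 := by
      by_contra hne
      have hlt : (rodrigues φ ψ n).natDegree < n := hdeg.lt_of_ne fun hn =>
        hne (leadingCoeff_eq_zero.mp (by rw [leadingCoeff, hn, hcoeff, h]))
      exact hne (hP.eq_zero_of_apply_mul_eq_zero fun g hg => by
        rw [hR g (hg.trans hlt.le), coeff_eq_zero_of_natDegree_lt (hg.trans_lt hlt)]; ring)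
    have hXn := hR (X ^ n) (natDegree_X_pow n).le
    rw [hR0, mul_zero, map_zero, coeff_X_pow_self, mul_one] at hXn
    simpa [n.factorial_ne_zero] using hXn.symm

lemma ddC_two_mul_ne_zero (hP : IsMonicOPS u P) (hφ : φ = C a * X ^ 2 + C b * X + C c)
    (hψ : ψ = C d * X + C e) (hne : φ ≠ 0 ∨ ψ ≠ 0) (heq : dDeriv (pMul φ u) = pMul ψ u) {n : ℕ}
    (hlow : ∀ j < 2 * n, ddC a d j ≠ 0) : ddC a d (2 * n) ≠ 0 := by
  intro hD
  have hpow : u (φ ^ n) ≠ 0 := fun h =>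
    Finset.prod_ne_zero_iff.mpr (fun i hi => hlow _ (by have := Finset.mem_range.mp hi; omega))
      ((hP.apply_pow_eq_zero_iff hφ hψ heq n).mp h)
  have hE : eeC b e n = 0 := by
    have h := apply_linear_mul_pow_eq_zero hφ hψ heq n
    rw [hD, zero_mul, zero_add] at h
    exact (mul_eq_zero.mp h).resolve_right hpow
  have hlin : ψ + C (n : ℂ) * derivative φ = 0 := by
    rw [add_C_mul_derivative_eq hφ hψ, hD, hE]; simp
  -- with `ψ + n φ' = 0`, Pearson's equation says that `φ ^ (n + 1) u` annihilates all derivatives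
  have hann : u ∘ₗ LinearMap.mulLeft ℂ (φ ^ (n + 1)) = 0 :=
    eq_zero_of_map_eq_zero (P := fun k => X ^ k) (fun k => ⟨monic_X_pow k, natDegree_X_pow k⟩) _
      fun k => by
        have h := apply_pow_succ_mul_derivative heq n (X ^ (k + 1))
        rw [hlin, zero_mul, zero_mul, map_zero, neg_zero, derivative_X_pow, Nat.add_sub_cancel,
          mul_left_comm, apply_C_mul] at h
        exact (mul_eq_zero.mp h).resolve_left (Nat.cast_ne_zero.mpr k.succ_ne_zero)
  have hφ0 : φ = 0 := pow_eq_zero_iff n.succ_ne_zero |>.mp <|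
    hP.eq_zero_of_apply_mul_eq_zero fun g _ => by rw [mul_comm]; exact LinearMap.congr_fun hann g
  have hψ0 : ψ = 0 := by simpa [hφ0] using hlin
  exact hne.elim (· hφ0) (· hψ0)

lemma ddC_two_mul_add_one_ne_zero (hP : IsMonicOPS u P) (hφ : φ = C a * X ^ 2 + C b * X + C c)
    (hψ : ψ = C d * X + C e) (heq : dDeriv (pMul φ u) = pMul ψ u) {n : ℕ}
    (hlow : ∀ j < 2 * n + 1, ddC a d j ≠ 0) : ddC a d (2 * n + 1) ≠ 0 := by
  intro hD
  have ha : a ≠ 0 := by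
    rintro rfl
    exact hlow 0 (by omega) (by simpa [ddC] using hD)
  have honly : ∀ j, j ≠ 2 * n + 1 → ddC a d j ≠ 0 := by
    intro j hj hzero
    have h : a * ((j : ℂ) - ((2 * n + 1 : ℕ) : ℂ)) = 0 := by
      simp only [ddC] at hD hzero; linear_combination hzero - hD
    exact hj (by exact_mod_cast sub_eq_zero.mp ((mul_eq_zero.mp h).resolve_left ha))
  -- the single vanishing `d_{2n+1}` kills the moment `u (φ ^ (2n+2))` but not `u (φ ^ (2n+3))`
  have hzero : u (φ ^ (2 * n + 2)) = 0 :=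
    (hP.apply_pow_eq_zero_iff hφ hψ heq _).mpr <| Finset.prod_eq_zero (i := 2 * n + 1)
      (Finset.mem_range.mpr (by omega)) (by convert hD using 2; omega)
  have hnonzero : u (φ ^ (2 * n + 2 + 1)) ≠ 0 := fun h =>
    Finset.prod_ne_zero_iff.mpr (fun i hi => honly _ (by have := Finset.mem_range.mp hi; omega))
      ((hP.apply_pow_eq_zero_iff hφ hψ heq _).mp h)
  have hrec := apply_pow_succ_recurrence hφ hψ heq (2 * n + 2) (honly _ (by omega))
  rw [hzero, mul_zero] at hrec
  exact mul_ne_zero (mul_ne_zero (honly _ (by omega)) (honly _ (by omega))) hnonzero hrec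

lemma ddC_ne_zero (hP : IsMonicOPS u P) (hφ : φ = C a * X ^ 2 + C b * X + C c)
    (hψ : ψ = C d * X + C e) (hne : φ ≠ 0 ∨ ψ ≠ 0) (heq : dDeriv (pMul φ u) = pMul ψ u) (j : ℕ) :
    ddC a d j ≠ 0 := by
  induction j using Nat.strong_induction_on with
  | _ j ih =>
    obtain ⟨n, rfl | rfl⟩ := Nat.even_or_odd' j
    · exact hP.ddC_two_mul_ne_zero hφ hψ hne heq ih
    · exact hP.ddC_two_mul_add_one_ne_zero hφ hψ heq ih

lemma eval_ne_zero (hP : IsMonicOPS u P) (hφ : φ = C a * X ^ 2 + C b * X + C c)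
    (hψ : ψ = C d * X + C e) (hne : φ ≠ 0 ∨ ψ ≠ 0) (heq : dDeriv (pMul φ u) = pMul ψ u) (n : ℕ) :
    φ.eval (-eeC b e n / ddC a d (2 * n)) ≠ 0 := by
  have hd := hP.ddC_ne_zero hφ hψ hne heq
  have hpow : u (φ ^ (n + 1)) ≠ 0 := fun h =>
    rodriguesCoeff_ne_zero hd _ _ ((hP.apply_pow_eq_zero_iff hφ hψ heq _).mp h)
  intro h
  have hrec := apply_pow_succ_recurrence hφ hψ heq n (hd _)
  rw [h, mul_zero, zero_mul] at hrec
  exact mul_ne_zero (mul_ne_zero (hd _) (hd _)) hpow hrec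

end IsMonicOPS

section Sufficiency

variable {a b c d e : ℂ} {φ ψ : ℂ[X]} {u : PDual}

lemma monic_C_inv_mul_rodrigues (hφ : φ = C a * X ^ 2 + C b * X + C c) (hψ : ψ = C d * X + C e)
    (hd : ∀ j, ddC a d j ≠ 0) (n : ℕ) :
    (C (rodriguesCoeff a d n n)⁻¹ * rodrigues φ ψ n).Monic ∧
      (C (rodriguesCoeff a d n n)⁻¹ * rodrigues φ ψ n).natDegree = n := by
  have hcoeff : (C (rodriguesCoeff a d n n)⁻¹ * rodrigues φ ψ n).coeff n = 1 := by
    rw [coeff_C_mul, rodrigues, coeff_rodriguesSeq hφ hψ,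
      inv_mul_cancel₀ (rodriguesCoeff_ne_zero hd n n)]
  have hdeg : (C (rodriguesCoeff a d n n)⁻¹ * rodrigues φ ψ n).natDegree = n :=
    le_antisymm ((natDegree_C_mul_le _ _).trans
        (natDegree_rodriguesSeq_le (hφ ▸ natDegree_quadratic_le) (hψ ▸ natDegree_linear_le) n n))
      (le_natDegree_of_ne_zero (by rw [hcoeff]; exact one_ne_zero))
  exact ⟨by rw [Monic, leadingCoeff, hdeg, hcoeff], hdeg⟩

lemma apply_one_ne_zero (hφ : φ = C a * X ^ 2 + C b * X + C c) (hψ : ψ = C d * X + C e)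
    (hu : u ≠ 0) (heq : dDeriv (pMul φ u) = pMul ψ u) (hd : ∀ j, ddC a d j ≠ 0) : u 1 ≠ 0 := by
  intro h1
  -- by the Rodrigues formula `u` vanishes on every normalized `rodrigues φ ψ n` with `n ≥ 1`
  refine hu (eq_zero_of_map_eq_zero (monic_C_inv_mul_rodrigues hφ hψ hd) u fun n => ?_)
  rw [← mul_one (_ * rodrigues φ ψ n), mul_assoc, apply_C_mul,
    apply_rodrigues_mul heq (natDegree_one.le.trans n.zero_le), coeff_one]
  rcases n with _ | n <;> simp [h1]

lemma apply_pow_ne_zero (hφ : φ = C a * X ^ 2 + C b * X + C c) (hψ : ψ = C d * X + C e)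
    (hu : u ≠ 0) (heq : dDeriv (pMul φ u) = pMul ψ u) (hd : ∀ j, ddC a d j ≠ 0)
    (hev : ∀ n, φ.eval (-eeC b e n / ddC a d (2 * n)) ≠ 0) (n : ℕ) : u (φ ^ n) ≠ 0 := by
  induction n with
  | zero => simpa using apply_one_ne_zero hφ hψ hu heq hd
  | succ n ih =>
    intro h
    have hrec := apply_pow_succ_recurrence hφ hψ heq n (hd _)
    rw [h, mul_zero] at hrec
    exact mul_ne_zero (mul_ne_zero (pow_ne_zero 2 (hd _)) (hev n)) ih hrec.symm

lemma isMonicOPS_C_inv_mul_rodrigues (hφ : φ = C a * X ^ 2 + C b * X + C c)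
    (hψ : ψ = C d * X + C e) (hu : u ≠ 0) (heq : dDeriv (pMul φ u) = pMul ψ u)
    (hd : ∀ j, ddC a d j ≠ 0) (hev : ∀ n, φ.eval (-eeC b e n / ddC a d (2 * n)) ≠ 0) :
    IsMonicOPS u fun n => C (rodriguesCoeff a d n n)⁻¹ * rodrigues φ ψ n := by
  have hP := monic_C_inv_mul_rodrigues hφ hψ hd
  have happly : ∀ n (g : ℂ[X]), g.natDegree ≤ n →
      u (g * (C (rodriguesCoeff a d n n)⁻¹ * rodrigues φ ψ n))
        = (rodriguesCoeff a d n n)⁻¹ * ((-1) ^ n * n.factorial * g.coeff n * u (φ ^ n)) := by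
    intro n g hg
    rw [mul_comm, mul_assoc, apply_C_mul, apply_rodrigues_mul heq hg]
  refine ⟨hP, fun m n hmn => ?_, fun n => ?_⟩
  · wlog hlt : m < n generalizing m n
    · rw [mul_comm]; exact this n m hmn.symm (by omega)
    rw [happly n _ ((hP m).2.le.trans hlt.le),
      coeff_eq_zero_of_natDegree_lt ((hP m).2.trans_lt hlt)]
    ring
  · have hcoeff := (hP n).1.coeff_natDegree
    rw [(hP n).2] at hcoeff
    rw [sq, happly n _ (hP n).2.le, hcoeff]
    simp [rodriguesCoeff_ne_zero hd, n.factorial_ne_zero, apply_pow_ne_zero hφ hψ hu heq hd hev]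

end Sufficiency

theorem stmt_0 (a b c d e : ℂ) (φ ψ : Polynomial ℂ)
    (hφ : φ = C a * X ^ 2 + C b * X + C c) (hψ : ψ = C d * X + C e)
    (hne : φ ≠ 0 ∨ ψ ≠ 0)
    (u : PDual) (hu : u ≠ 0)
    (heq : dDeriv (pMul φ u) = pMul ψ u) :
    IsRegularFunc u ↔
      ∀ n : ℕ, ddC a d n ≠ 0 ∧ φ.eval (-(eeC b e n) / ddC a d (2 * n)) ≠ 0 := by
  constructor
  · rintro ⟨P, hP⟩ n
    exact ⟨IsMonicOPS.ddC_ne_zero (P := P) hP hφ hψ hne heq n,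
      IsMonicOPS.eval_ne_zero (P := P) hP hφ hψ hne heq n⟩
  · intro h
    exact ⟨_, isMonicOPS_C_inv_mul_rodrigues hφ hψ hu heq (fun n => (h n).1) fun n => (h n).2⟩

end HahnOPSPaper
end
end

section
/- Let u be a nonzero linear functional on 𝒫 satisfying D_{q,ω}(φu) = ψu, where φ(x) = ax² + bx + c has degree at most 2, ψ(x) = dx + e has degree at most 1, and at least one of φ, ψ is not the zero polynomial. If u is regular, then d_n ≠ 0 and φ(−e_n/d_{2n}) ≠ 0 for every integer n ≥ 0. -/
open Polynomial

noncomputable section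

namespace HahnOPSPaper

/-!
Write `D` for `D*_{q,ω} = D_{1/q,-ω/q}` and `ℓ x = (x - ω) / q`, so that the hypothesis reads
`⟨u, φ · D f⟩ = -q ⟨u, ψ f⟩` and `D (f g) = (D f) g + f(ℓ x) · D g`. Testing the equation on
`g · P_{n+1}` with `p = g ∘ ℓ` gives, whenever `deg p ≤ n`,
`⟨u, φ · p · D P_{n+1}⟩ = -q d_n p_n ⟨u, P_{n+1}²⟩`.
Thus the `D P_{n+1}` are orthogonal for `φ u`, with squared norms proportional to `d_n`.
If `d_N = 0`, then `φ · D P_{N+1}` is `u`-orthogonal to a basis, so it vanishes, which is absurd.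
Otherwise the rescaled `D P_{n+1}` are the monic OPS of `φ u`, which satisfies an equation of the
same type for `(φ ∘ ℓ, ψ + q⁻¹ D φ)`; its `d_k` is `q⁻² d_{k+2}`, and `φ(-e_{n+1}/d_{2n+2})` is its
value at step `n`. Induction on `n` thus reduces the claim to `n = 0`, where a root `-e/d` of `φ`
would make `(x + e/d) u` vanish.
-/

section Field

variable {K : Type*} [Field K]

theorem _root_.Polynomial.Sequence.apply_eq_zero_of_degree_lt (S : Sequence K)
    {w : K[X] →ₗ[K] K} {m : ℕ} (hw : ∀ i < m, w (S i) = 0) {p : K[X]} (hp : p.degree < m) :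
    w p = 0 := by
  have hspan : Submodule.span K (S '' Set.Iio m) ≤ LinearMap.ker w :=
    Submodule.span_le.2 (by rintro _ ⟨i, hi, rfl⟩; exact hw i hi)
  rw [S.span_degreeLT fun i _ => (leadingCoeff_ne_zero.2 (S.ne_zero i)).isUnit] at hspan
  exact hspan (mem_degreeLT.2 hp)

theorem _root_.Polynomial.Sequence.eq_zero_of_forall_apply_eq_zero (S : Sequence K)
    {w : K[X] →ₗ[K] K} (hw : ∀ i, w (S i) = 0) : w = 0 := by
  have hspan : Submodule.span K (Set.range S) ≤ LinearMap.ker w :=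
    Submodule.span_le.2 (by rintro _ ⟨i, rfl⟩; exact hw i)
  rw [S.span fun i => (leadingCoeff_ne_zero.2 (S.ne_zero i)).isUnit, top_le_iff] at hspan
  exact LinearMap.ker_eq_top.1 hspan

theorem degree_lt_succ_iff {p : K[X]} {n : ℕ} : p.degree < ↑(n + 1) ↔ p.natDegree ≤ n := by
  rw [← mem_degreeLT, degreeLT_succ_eq_degreeLE, mem_degreeLE, natDegree_le_iff_degree_le]

theorem degree_sub_C_mul_lt_s3 {p Q : K[X]} {n : ℕ} (hp : p.natDegree ≤ n) (hQ : Q.natDegree ≤ n)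
    (hQn : Q.coeff n = 1) : (p - C (p.coeff n) * Q).degree < n := by
  rw [degree_lt_iff_coeff_zero]
  intro m hm
  rcases hm.lt_or_eq with hm | rfl
  · simp [coeff_eq_zero_of_natDegree_lt (hp.trans_lt hm),
      coeff_eq_zero_of_natDegree_lt (hQ.trans_lt hm)]
  · simp [hQn]

theorem coeff_comp_C_mul_X_add_C {α β : K} (hα : α ≠ 0) {p : K[X]} {n : ℕ}
    (hp : p.natDegree ≤ n) : (p.comp (C α * X + C β)).coeff n = α ^ n * p.coeff n := by
  have hlin : (C α * X + C β).natDegree = 1 := natDegree_linear hα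
  rcases hp.lt_or_eq with hp | rfl
  · have hcomp : (p.comp (C α * X + C β)).natDegree < n := by
      simpa [hlin] using natDegree_comp_le.trans_lt (by rwa [hlin, mul_one])
    rw [coeff_eq_zero_of_natDegree_lt hcomp, coeff_eq_zero_of_natDegree_lt hp, mul_zero]
  · have h := coeff_comp_degree_mul_degree (p := p) (hlin ▸ one_ne_zero)
    rw [hlin, mul_one, leadingCoeff_linear hα] at h
    rw [h, leadingCoeff, mul_comm]

end Field

theorem qBracket_succ (x : ℂ) (n : ℕ) : qBracket x (n + 1) = qBracket x n + x ^ n :=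
  Finset.sum_range_succ _ _

theorem qBracket_succ' (x : ℂ) (n : ℕ) : qBracket x (n + 1) = x * qBracket x n + 1 :=
  geom_sum_succ

theorem qBracket_add (x : ℂ) (m n : ℕ) :
    qBracket x (m + n) = qBracket x m + x ^ m * qBracket x n := by
  simp only [qBracket, Finset.sum_range_add, pow_add, Finset.mul_sum]

theorem qBracket_ne_zero {x : ℂ} (hx : ∀ n : ℕ, 0 < n → x ^ n = 1 → x = 1) {m : ℕ}
    (hm : m ≠ 0) : qBracket x m ≠ 0 := by
  intro h
  by_cases hx1 : x = 1
  · simp [hx1, qBracket, hm] at h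
  · have hgeom : qBracket x m * (x - 1) = x ^ m - 1 := geom_sum_mul x m
    rw [h, zero_mul, eq_comm, sub_eq_zero] at hgeom
    exact hx1 (hx m (Nat.pos_of_ne_zero hm) hgeom)

theorem qBracket_inv_ne_zero {q : ℂ} (hq : ∀ n : ℕ, 0 < n → q ^ n = 1 → q = 1) {m : ℕ}
    (hm : m ≠ 0) : qBracket q⁻¹ m ≠ 0 :=
  qBracket_ne_zero (fun n hn h => by rw [hq n hn (by rwa [inv_pow, inv_eq_one] at h), inv_one]) hm

theorem pow_mul_qBracket_inv {q : ℂ} (hq : q ≠ 0) (n : ℕ) :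
    q ^ n * qBracket q⁻¹ n = q * qBracket q n := by
  induction n with
  | zero => simp [qBracket]
  | succ n ih =>
    have hinv : q ^ n * q⁻¹ ^ n = 1 := by rw [← mul_pow, mul_inv_cancel₀ hq, one_pow]
    rw [qBracket_succ, qBracket_succ', pow_succ, mul_add, mul_right_comm, ih]
    linear_combination q * hinv

section Hahn

variable {r s : ℂ} {D : ℂ[X] →ₗ[ℂ] ℂ[X]}

theorem C_sub_one_mul_X_add_C_ne_zero (hrs : r ≠ 1 ∨ s ≠ 0) : C (r - 1) * X + C s ≠ 0 := by
  intro h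
  have h1 := congr_arg (coeff · 1) h
  have h0 := congr_arg (coeff · 0) h
  simp [coeff_C] at h0 h1
  exact hrs.elim (· (sub_eq_zero.1 h1)) (· h0)

namespace IsHahn

variable (hD : IsHahn r s D) (hrs : r ≠ 1 ∨ s ≠ 0)
include hD hrs

theorem map_eq {f g : ℂ[X]} (h : (C (r - 1) * X + C s) * g = f.comp (C r * X + C s) - f) :
    D f = g :=
  mul_left_cancel₀ (C_sub_one_mul_X_add_C_ne_zero hrs) ((hD f).trans h.symm)

theorem map_C (c : ℂ) : D (C c) = 0 :=
  hD.map_eq hrs (by simp)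

theorem map_mul (f g : ℂ[X]) : D (f * g) = D f * g + f.comp (C r * X + C s) * D g :=
  hD.map_eq hrs (by
    rw [mul_comp]
    linear_combination g * hD f + f.comp (C r * X + C s) * hD g)

theorem map_quadratic (a b c : ℂ) :
    D (C a * X ^ 2 + C b * X + C c) = C (a * (1 + r)) * X + C (a * s + b) :=
  hD.map_eq hrs (by
    simp only [add_comp, mul_comp, C_comp, X_comp, pow_comp, C_add, C_mul, C_sub, C_1]
    ring)

theorem map_X_pow (n : ℕ) :
    D (X ^ n) = ∑ i ∈ Finset.range n, (C r * X + C s) ^ i * X ^ (n - 1 - i) :=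
  hD.map_eq hrs (by
    rw [X_pow_comp, ← geom_sum₂_mul, mul_comm, map_sub, map_one]
    ring)

theorem natDegree_map_X_pow_succ_le (n : ℕ) : (D (X ^ (n + 1))).natDegree ≤ n := by
  rw [hD.map_X_pow hrs]
  refine natDegree_sum_le_of_forall_le _ _ fun i hi => ?_
  have hi : i ≤ n := Nat.lt_succ_iff.1 (Finset.mem_range.1 hi)
  calc _ ≤ i * 1 + (n + 1 - 1 - i) :=
        natDegree_mul_le.trans (add_le_add (natDegree_pow_le_of_le i natDegree_linear_le)
          (natDegree_X_pow_le _))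
    _ = n := by omega

theorem coeff_map_X_pow_succ (n : ℕ) : (D (X ^ (n + 1))).coeff n = qBracket r (n + 1) := by
  rw [hD.map_X_pow hrs, finsetSum_coeff, qBracket]
  refine Finset.sum_congr rfl fun i hi => ?_
  have hi : i ≤ n := Nat.lt_succ_iff.1 (Finset.mem_range.1 hi)
  rw [coeff_mul_X_pow', if_pos (by omega), show n - (n + 1 - 1 - i) = i * 1 by omega,
    coeff_pow_of_natDegree_le natDegree_linear_le]
  simp

theorem degree_map_lt {f : ℂ[X]} {n : ℕ} (hf : f.degree < ↑(n + 1)) : (D f).degree < n := by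
  suffices degreeLT ℂ (n + 1) ≤ (degreeLT ℂ n).comap D from
    mem_degreeLT.1 (this (mem_degreeLT.2 hf))
  rw [degreeLT_eq_span_X_pow, Submodule.span_le, Finset.coe_image, Set.image_subset_iff]
  intro j hj
  rcases j with _ | j
  · show D (X ^ 0) ∈ degreeLT ℂ n
    rw [pow_zero, ← C_1, hD.map_C hrs]
    exact zero_mem _
  · refine mem_degreeLT.2 (degree_le_natDegree.trans_lt ?_)
    exact_mod_cast (hD.natDegree_map_X_pow_succ_le hrs j).trans_lt
      (by simpa using Finset.mem_range.1 hj)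

theorem natDegree_map_le {f : ℂ[X]} {n : ℕ} (hf : f.natDegree ≤ n + 1) :
    (D f).natDegree ≤ n :=
  degree_lt_succ_iff.1 (hD.degree_map_lt hrs (degree_lt_succ_iff.2 hf))

theorem coeff_map {f : ℂ[X]} {n : ℕ} (hf : f.natDegree ≤ n + 1) :
    (D f).coeff n = qBracket r (n + 1) * f.coeff (n + 1) := by
  have hrem := hD.degree_map_lt hrs
    (degree_sub_C_mul_lt_s3 hf (natDegree_X_pow_le _) (by simp))
  have hsplit : f = (f - C (f.coeff (n + 1)) * X ^ (n + 1)) + f.coeff (n + 1) • X ^ (n + 1) := by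
    rw [smul_eq_C_mul]; ring
  conv_lhs => rw [hsplit]
  rw [map_add, map_smul, coeff_add, coeff_eq_zero_of_degree_lt hrem, coeff_smul,
    hD.coeff_map_X_pow_succ hrs, smul_eq_mul, zero_add, mul_comm]

end IsHahn

end Hahn

namespace IsMonicOPS

variable {u : PDual} {P : ℕ → ℂ[X]} (hP : IsMonicOPS u P)
include hP

theorem coeff_self (n : ℕ) : (P n).coeff n = 1 := by
  simpa [(hP.1 n).2] using (hP.1 n).1.coeff_natDegree

theorem apply_mul_eq_zero {p : ℂ[X]} {n : ℕ} (hp : p.degree < n) : u (p * P n) = 0 := by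
  let S : Sequence ℂ :=
    ⟨P, fun n => (degree_eq_iff_natDegree_eq (hP.1 n).1.ne_zero).2 (hP.1 n).2⟩
  rw [mul_comm]
  exact S.apply_eq_zero_of_degree_lt (w := pMul (P n) u) (fun i hi => hP.2.1 n i hi.ne') hp

theorem apply_mul_eq {p : ℂ[X]} {n : ℕ} (hp : p.natDegree ≤ n) :
    u (p * P n) = p.coeff n * u (P n * P n) := by
  have hrem : u ((p - C (p.coeff n) * P n) * P n) = 0 :=
    hP.apply_mul_eq_zero (degree_sub_C_mul_lt_s3 hp (hP.1 n).2.le (hP.coeff_self n))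
  rwa [sub_mul, map_sub, sub_eq_zero, mul_assoc, ← smul_eq_C_mul, map_smul, smul_eq_mul] at hrem

theorem eq_zero_of_forall_apply_mul {p : ℂ[X]} (h : ∀ f, u (p * f) = 0) : p = 0 := by
  by_contra hp
  have hnorm := hP.apply_mul_eq (le_refl p.natDegree)
  rw [h, eq_comm] at hnorm
  exact mul_ne_zero (leadingCoeff_ne_zero.2 hp) (by simpa [sq] using hP.2.2 p.natDegree) hnorm

variable {r s : ℂ} {D : ℂ[X] →ₗ[ℂ] ℂ[X]}

theorem natDegree_map_succ_le (hD : IsHahn r s D) (hrs : r ≠ 1 ∨ s ≠ 0) (m : ℕ) :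
    (D (P (m + 1))).natDegree ≤ m :=
  hD.natDegree_map_le hrs (hP.1 (m + 1)).2.le

theorem coeff_map_succ (hD : IsHahn r s D) (hrs : r ≠ 1 ∨ s ≠ 0) (m : ℕ) :
    (D (P (m + 1))).coeff m = qBracket r (m + 1) := by
  rw [hD.coeff_map hrs (hP.1 (m + 1)).2.le, hP.coeff_self, mul_one]

end IsMonicOPS

def pearsonPoly (q : ℂ) (φ ψ : ℂ[X]) (D : ℂ[X] →ₗ[ℂ] ℂ[X]) (f : ℂ[X]) : ℂ[X] :=
  C q * (ψ * f) + φ * D f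

section Pearson

variable {q ω a b c d e : ℂ} {φ ψ : ℂ[X]} {D : ℂ[X] →ₗ[ℂ] ℂ[X]} {u : PDual} {P : ℕ → ℂ[X]}

theorem hahnDual_pMul_eq_pMul_iff (hq : q ≠ 0) :
    hahnDual q D (pMul φ u) = pMul ψ u ↔ ∀ f, u (φ * D f) = -q * u (ψ * f) := by
  simp only [LinearMap.ext_iff, hahnDual, pMul, LinearMap.smul_apply, LinearMap.comp_apply,
    LinearMap.mulLeft_apply, smul_eq_mul]
  refine forall_congr' fun f => ⟨fun h => ?_, fun h => ?_⟩
  · rw [← h]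
    field_simp
  · rw [h]
    field_simp

theorem apply_pearsonPoly (hpe : ∀ f, u (φ * D f) = -q * u (ψ * f)) (f : ℂ[X]) :
    u (pearsonPoly q φ ψ D f) = 0 := by
  rw [pearsonPoly, map_add, ← smul_eq_C_mul, map_smul, smul_eq_mul, hpe]
  ring

theorem ne_zero_of_pearson (hq : q ≠ 0) (hpe : ∀ f, u (φ * D f) = -q * u (ψ * f))
    (hP : IsMonicOPS u P) (hne : φ ≠ 0 ∨ ψ ≠ 0) : φ ≠ 0 := by
  rintro rfl
  refine hne.resolve_left (not_not.2 rfl) (hP.eq_zero_of_forall_apply_mul fun f => ?_)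
  simpa [hq] using (hpe f).symm

variable (hD : IsHahn q⁻¹ (-ω / q) D) (hrs : q⁻¹ ≠ 1 ∨ -ω / q ≠ 0)
include hD hrs

theorem pearsonPoly_mul (f g : ℂ[X]) :
    pearsonPoly q φ ψ D (f * g) =
      pearsonPoly q φ ψ D f * g + φ * (f.comp (C q⁻¹ * X + C (-ω / q)) * D g) := by
  rw [pearsonPoly, pearsonPoly, hD.map_mul hrs]
  ring

theorem apply_mul_comp_mul_map (hpe : ∀ f, u (φ * D f) = -q * u (ψ * f)) (f g : ℂ[X]) :
    u (φ * (f.comp (C q⁻¹ * X + C (-ω / q)) * D g)) = -u (pearsonPoly q φ ψ D f * g) := by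
  have h := apply_pearsonPoly hpe (f * g)
  rw [pearsonPoly_mul hD hrs, map_add] at h
  linear_combination h

theorem pearson_pMul (hq : q ≠ 0) (hpe : ∀ f, u (φ * D f) = -q * u (ψ * f)) (f : ℂ[X]) :
    pMul φ u (φ.comp (C q⁻¹ * X + C (-ω / q)) * D f) =
      -q * pMul φ u ((ψ + C q⁻¹ * D φ) * f) := by
  have h := hpe (φ * f)
  rw [hD.map_mul hrs, mul_add, map_add] at h
  have hsplit : φ * ((ψ + C q⁻¹ * D φ) * f) = ψ * (φ * f) + q⁻¹ • (φ * (D φ * f)) := by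
    rw [smul_eq_C_mul]
    ring
  simp only [pMul, LinearMap.comp_apply, LinearMap.mulLeft_apply]
  rw [hsplit, map_add, map_smul, smul_eq_mul]
  linear_combination h + u (φ * (D φ * f)) * mul_inv_cancel₀ hq

variable (hφ : φ = C a * X ^ 2 + C b * X + C c) (hψ : ψ = C d * X + C e)
include hφ hψ

theorem natDegree_pearsonPoly_le {f : ℂ[X]} {n : ℕ} (hf : f.natDegree ≤ n) :
    (pearsonPoly q φ ψ D f).natDegree ≤ n + 1 := by
  have hψ1 : ψ.natDegree ≤ 1 := hψ ▸ natDegree_linear_le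
  have hφDf : (φ * D f).natDegree ≤ n + 1 := by
    rcases n with _ | n
    · rw [eq_C_of_natDegree_le_zero hf, hD.map_C hrs, mul_zero, natDegree_zero]
      exact Nat.zero_le _
    · have hφ2 : φ.natDegree ≤ 2 := hφ ▸ natDegree_quadratic_le
      have hDf := hD.natDegree_map_le hrs hf
      exact natDegree_mul_le.trans (by omega)
  refine natDegree_add_le_of_degree_le ((natDegree_C_mul_le _ _).trans ?_) hφDf
  exact natDegree_mul_le.trans (by omega)

theorem coeff_pearsonPoly {f : ℂ[X]} {n : ℕ} (hf : f.natDegree ≤ n) :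
    (pearsonPoly q φ ψ D f).coeff (n + 1) = (q * d + a * qBracket q⁻¹ n) * f.coeff n := by
  have hψf : (ψ * f).coeff (n + 1) = d * f.coeff n := by
    rw [add_comm, coeff_mul_add_eq_of_natDegree_le (hψ ▸ natDegree_linear_le) hf, hψ]
    simp
  have hφDf : (φ * D f).coeff (n + 1) = a * qBracket q⁻¹ n * f.coeff n := by
    rcases n with _ | n
    · rw [eq_C_of_natDegree_le_zero hf, hD.map_C hrs]
      simp [qBracket]
    · rw [show n + 1 + 1 = 2 + n by ring, coeff_mul_add_eq_of_natDegree_le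
        (hφ ▸ natDegree_quadratic_le) (hD.natDegree_map_le hrs hf), hD.coeff_map hrs hf, hφ]
      simp [mul_assoc]
  rw [pearsonPoly, coeff_add, coeff_C_mul, hψf, hφDf]
  ring

variable (hpe : ∀ f, u (φ * D f) = -q * u (ψ * f)) (hP : IsMonicOPS u P)
include hpe hP

theorem apply_mul_mul_map_of_natDegree_le (hq : q ≠ 0) {p : ℂ[X]} {n : ℕ}
    (hp : p.natDegree ≤ n) :
    u (φ * (p * D (P (n + 1)))) =
      -(q * ddQ q a d n * p.coeff n) * u (P (n + 1) * P (n + 1)) := by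
  -- `p = g(ℓ x)` with `ℓ x = (x - ω) / q`; the product rule then moves `D` from `P (n + 1)` to `g`.
  set g := p.comp (C q * X + C ω)
  have hgp : g.comp (C q⁻¹ * X + C (-ω / q)) = p := by
    have hlin : (C q * X + C ω).comp (C q⁻¹ * X + C (-ω / q)) = X := by
      simp only [add_comp, mul_comp, C_comp, X_comp, mul_add, ← mul_assoc, ← C_mul,
        mul_inv_cancel₀ hq, C_1, one_mul, add_assoc, ← C_add]
      rw [show q * (-ω / q) + ω = 0 by field_simp; ring, C_0, add_zero]
    rw [comp_assoc, hlin, comp_X]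
  have hg : g.natDegree ≤ n := natDegree_comp_le.trans
    (by simpa using Nat.mul_le_mul hp (natDegree_linear_le (a := q) (b := ω)))
  calc u (φ * (p * D (P (n + 1)))) = -u (pearsonPoly q φ ψ D g * P (n + 1)) := by
        rw [← apply_mul_comp_mul_map hD hrs hpe, hgp]
    _ = -((q * d + a * qBracket q⁻¹ n) * (q ^ n * p.coeff n)) * u (P (n + 1) * P (n + 1)) := by
        rw [hP.apply_mul_eq (natDegree_pearsonPoly_le hD hrs hφ hψ hg),
          coeff_pearsonPoly hD hrs hφ hψ hg, coeff_comp_C_mul_X_add_C hq hp]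
        ring
    _ = _ := by
        rw [ddQ]
        linear_combination
          (-a * p.coeff n * u (P (n + 1) * P (n + 1))) * pow_mul_qBracket_inv hq n

theorem apply_mul_map_mul_map_of_lt (hq : q ≠ 0) {m n : ℕ} (hmn : m < n) :
    u (φ * (D (P (m + 1)) * D (P (n + 1)))) = 0 := by
  have hdeg := hP.natDegree_map_succ_le hD hrs m
  rw [apply_mul_mul_map_of_natDegree_le hD hrs hφ hψ hpe hP hq (hdeg.trans hmn.le),
    coeff_eq_zero_of_natDegree_lt (hdeg.trans_lt hmn)]
  ring

theorem ddQ_ne_zero (hq : q ≠ 0) (hqr : ∀ n : ℕ, 0 < n → q ^ n = 1 → q = 1) (hφ0 : φ ≠ 0)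
    (N : ℕ) : ddQ q a d N ≠ 0 := by
  -- If `d_N = 0`, then `φ * D (P (N + 1))` is `u`-orthogonal to the basis `(D (P (k + 1)))ₖ`.
  intro hN
  have hκ (m : ℕ) : qBracket q⁻¹ (m + 1) ≠ 0 := qBracket_inv_ne_zero hqr m.succ_ne_zero
  let S : Sequence ℂ := ⟨fun m => D (P (m + 1)), fun m =>
    degree_eq_of_le_of_coeff_ne_zero (natDegree_le_iff_degree_le.1
      (hP.natDegree_map_succ_le hD hrs m)) (by rw [hP.coeff_map_succ hD hrs]; exact hκ m)⟩
  have hw : pMul (φ * D (P (N + 1))) u = 0 := S.eq_zero_of_forall_apply_eq_zero fun k => by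
    change u (φ * D (P (N + 1)) * D (P (k + 1))) = 0
    rcases lt_or_ge N k with hNk | hkN
    · rw [mul_assoc]
      exact apply_mul_map_mul_map_of_lt hD hrs hφ hψ hpe hP hq hNk
    · rw [mul_assoc, mul_comm (D _), apply_mul_mul_map_of_natDegree_le hD hrs hφ hψ hpe hP hq
        ((hP.natDegree_map_succ_le hD hrs k).trans hkN), hN]
      ring
  rcases mul_eq_zero.1 (hP.eq_zero_of_forall_apply_mul (LinearMap.congr_fun hw)) with h | h
  · exact hφ0 h
  · exact hκ N (by rw [← hP.coeff_map_succ hD hrs, h, coeff_zero])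

theorem isMonicOPS_pMul (hq : q ≠ 0) (hqr : ∀ n : ℕ, 0 < n → q ^ n = 1 → q = 1)
    (hdd : ∀ m, ddQ q a d m ≠ 0) :
    IsMonicOPS (pMul φ u) fun m => C (qBracket q⁻¹ (m + 1))⁻¹ * D (P (m + 1)) := by
  have hκ (m : ℕ) : qBracket q⁻¹ (m + 1) ≠ 0 := qBracket_inv_ne_zero hqr m.succ_ne_zero
  have hscale (x y : ℂ) (f g : ℂ[X]) :
      pMul φ u (C x * f * (C y * g)) = x * y * u (φ * (f * g)) := by
    change u (φ * (C x * f * (C y * g))) = _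
    rw [show φ * (C x * f * (C y * g)) = (x * y) • (φ * (f * g)) by
      rw [smul_eq_C_mul, C_mul]; ring, map_smul, smul_eq_mul]
  refine ⟨fun m => ?_, fun m n hmn => ?_, fun m => ?_⟩
  · have hcoeff : (C (qBracket q⁻¹ (m + 1))⁻¹ * D (P (m + 1))).coeff m = 1 := by
      rw [coeff_C_mul, hP.coeff_map_succ hD hrs, inv_mul_cancel₀ (hκ m)]
    have hdeg := natDegree_eq_of_le_of_coeff_ne_zero
      ((natDegree_C_mul_le _ _).trans (hP.natDegree_map_succ_le hD hrs m))
      (hcoeff ▸ one_ne_zero)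
    exact ⟨by rw [Monic, leadingCoeff, hdeg, hcoeff], hdeg⟩
  · rw [hscale]
    rcases hmn.lt_or_gt with h | h
    · rw [apply_mul_map_mul_map_of_lt hD hrs hφ hψ hpe hP hq h, mul_zero]
    · rw [mul_comm (D _), apply_mul_map_mul_map_of_lt hD hrs hφ hψ hpe hP hq h, mul_zero]
  · have hnorm : u (P (m + 1) * P (m + 1)) ≠ 0 := by simpa [sq] using hP.2.2 (m + 1)
    rw [sq, hscale, apply_mul_mul_map_of_natDegree_le hD hrs hφ hψ hpe hP hq
      (hP.natDegree_map_succ_le hD hrs m), hP.coeff_map_succ hD hrs]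
    simp [hκ m, hq, hdd m, hnorm]

theorem eval_neg_div_ne_zero (hq : q ≠ 0) (hdd : ∀ m, ddQ q a d m ≠ 0) :
    φ.eval (-e / d) ≠ 0 := by
  -- A root `x₀ = -e / d` of `φ` is a root of `ψ`, hence of every `pearsonPoly (X ^ t)`, and the
  -- quotients by `X - x₀` form a basis annihilated by `(X - x₀) u`.
  intro hroot
  have hd : d ≠ 0 := by simpa [ddQ, qBracket] using hdd 0
  set x₀ := -e / d
  let W (t : ℕ) : ℂ[X] := pearsonPoly q φ ψ D (X ^ t)
  have hWroot (t : ℕ) : (W t).IsRoot x₀ := by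
    have hψ₀ : ψ.eval x₀ = 0 := by
      rw [hψ, eval_add, eval_mul, eval_C, eval_X, eval_C, mul_div_cancel₀ _ hd]
      ring
    simp [W, pearsonPoly, hroot, hψ₀]
  have hWcoeff (t : ℕ) : (W t).coeff (t + 1) ≠ 0 := by
    rw [coeff_pearsonPoly hD hrs hφ hψ (natDegree_X_pow_le t), coeff_X_pow_self, mul_one]
    intro h0
    refine hdd t ((mul_eq_zero.1 (?_ : q * ddQ q a d t = 0)).resolve_left hq)
    rw [ddQ]
    linear_combination q ^ t * h0 - a * pow_mul_qBracket_inv hq t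
  have hWdeg (t : ℕ) : (W t).natDegree = t + 1 := natDegree_eq_of_le_of_coeff_ne_zero
    (natDegree_pearsonPoly_le hD hrs hφ hψ (natDegree_X_pow_le t)) (hWcoeff t)
  have hdiv (t : ℕ) : (X - C x₀) * (W t /ₘ (X - C x₀)) = W t :=
    mul_divByMonic_eq_iff_isRoot.2 (hWroot t)
  let S : Sequence ℂ := ⟨fun t => W t /ₘ (X - C x₀), fun t => by
    have hne : W t /ₘ (X - C x₀) ≠ 0 := fun h =>
      hWcoeff t (by rw [← hdiv t, h, mul_zero, coeff_zero])
    rw [degree_eq_natDegree hne, natDegree_divByMonic _ (monic_X_sub_C x₀), hWdeg,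
      natDegree_X_sub_C, Nat.add_sub_cancel]⟩
  have hw : pMul (X - C x₀) u = 0 := S.eq_zero_of_forall_apply_eq_zero fun t => by
    change u ((X - C x₀) * (W t /ₘ (X - C x₀))) = 0
    rw [hdiv]
    exact apply_pearsonPoly hpe _
  exact X_sub_C_ne_zero x₀ (hP.eq_zero_of_forall_apply_mul (LinearMap.congr_fun hw))

end Pearson

theorem quadratic_comp_linear (a b c α β : ℂ) :
    (C a * X ^ 2 + C b * X + C c).comp (C α * X + C β) =
      C (a * α ^ 2) * X ^ 2 + C (2 * a * α * β + b * α) * X + C (a * β ^ 2 + b * β + c) := by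
  simp only [add_comp, mul_comp, C_comp, X_comp, pow_comp, C_add, C_mul, C_pow, C_ofNat]
  ring

section Shift

variable {q ω a b d e a' b' d' e' : ℂ} (ha : q ^ 2 * a' = a)
  (hd : q ^ 2 * d' = q ^ 2 * d + (q + 1) * a)
include ha hd

theorem ddQ_shift (k : ℕ) : q ^ 2 * ddQ q a' d' k = ddQ q a d (k + 2) := by
  rw [ddQ, ddQ, qBracket_succ, qBracket_succ]
  linear_combination q ^ k * hd + qBracket q k * ha

theorem eeQ_shift (hb : q ^ 2 * b' = q * b - 2 * a * ω)
    (he : q ^ 2 * e' = q ^ 2 * e + q * b - a * ω) (n : ℕ) :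
    q ^ 2 * eeQ q ω a' b' d' e' n = q * eeQ q ω a b d e (n + 1) - ω * ddQ q a d (2 * n + 2) := by
  have h2n : qBracket q (2 * n + 2) = qBracket q (n + 1) + q ^ (n + 1) * qBracket q (n + 1) := by
    rw [← qBracket_add]
    ring_nf
  have hrel : q * qBracket q n + 1 = qBracket q n + q ^ n := by
    rw [← qBracket_succ', qBracket_succ]
  simp only [eeQ, ddQ]
  rw [h2n, qBracket_succ, show 2 * n + 2 = (n + 1) + (n + 1) by ring, pow_add, pow_succ]
  linear_combination q ^ n * he + ω * q ^ n * qBracket q n * hd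
    + ω * qBracket q n ^ 2 * ha + qBracket q n * hb - a * ω * qBracket q n * hrel

theorem eval_neg_eeQ_div_ddQ_shift (hq : q ≠ 0) (hb : q ^ 2 * b' = q * b - 2 * a * ω)
    (he : q ^ 2 * e' = q ^ 2 * e + q * b - a * ω) {n : ℕ} (hn : ddQ q a' d' (2 * n) ≠ 0) :
    (C q⁻¹ * X + C (-ω / q)).eval (-eeQ q ω a' b' d' e' n / ddQ q a' d' (2 * n)) =
      -eeQ q ω a b d e (n + 1) / ddQ q a d (2 * (n + 1)) := by
  have hDn : q ^ 2 * ddQ q a' d' (2 * n) = ddQ q a d (2 * n + 2) := ddQ_shift ha hd _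
  rw [mul_add, mul_one, ← hDn]
  simp only [eval_add, eval_mul, eval_C, eval_X]
  field_simp
  refine mul_left_cancel₀ hq ?_
  linear_combination -eeQ_shift ha hd hb he n - ω * hDn

end Shift

theorem eval_ne_zero_of_pearson {q ω : ℂ} {D : ℂ[X] →ₗ[ℂ] ℂ[X]} (hq : q ≠ 0)
    (hqr : ∀ n : ℕ, 0 < n → q ^ n = 1 → q = 1) (hD : IsHahn q⁻¹ (-ω / q) D)
    (hrs : q⁻¹ ≠ 1 ∨ -ω / q ≠ 0) (n : ℕ) :
    ∀ {a b c d e : ℂ} {φ ψ : ℂ[X]} {u : PDual} {P : ℕ → ℂ[X]},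
      φ = C a * X ^ 2 + C b * X + C c → ψ = C d * X + C e →
      (∀ f, u (φ * D f) = -q * u (ψ * f)) → IsMonicOPS u P → (∀ k, ddQ q a d k ≠ 0) →
      φ.eval (-eeQ q ω a b d e n / ddQ q a d (2 * n)) ≠ 0 := by
  induction n with
  | zero =>
    intro a b c d e φ ψ u P hφ hψ hpe hP hdd
    simpa [eeQ, ddQ, qBracket] using eval_neg_div_ne_zero hD hrs hφ hψ hpe hP hq hdd
  | succ n ih =>
    intro a b c d e φ ψ u P hφ hψ hpe hP hdd
    obtain ⟨a', b', c', hΦ, ha, hb⟩ : ∃ a' b' c',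
        φ.comp (C q⁻¹ * X + C (-ω / q)) = C a' * X ^ 2 + C b' * X + C c' ∧
          q ^ 2 * a' = a ∧ q ^ 2 * b' = q * b - 2 * a * ω :=
      ⟨_, _, _, by rw [hφ, quadratic_comp_linear], by field_simp, by field_simp; ring⟩
    obtain ⟨d', e', hΨ, hd, he⟩ : ∃ d' e', ψ + C q⁻¹ * D φ = C d' * X + C e' ∧
          q ^ 2 * d' = q ^ 2 * d + (q + 1) * a ∧ q ^ 2 * e' = q ^ 2 * e + q * b - a * ω :=
      ⟨d + q⁻¹ * (a * (1 + q⁻¹)), e + q⁻¹ * (a * (-ω / q) + b),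
        by rw [hψ, hφ, hD.map_quadratic hrs]; simp only [C_add, C_mul]; ring,
        by field_simp, by field_simp; ring⟩
    have hdd' (k : ℕ) : ddQ q a' d' k ≠ 0 := fun h =>
      hdd (k + 2) (by rw [← ddQ_shift ha hd, h, mul_zero])
    have hIH := ih hΦ hΨ (pearson_pMul hD hrs hq hpe)
      (isMonicOPS_pMul hD hrs hφ hψ hpe hP hq hqr hdd) hdd'
    rwa [eval_comp, eval_neg_eeQ_div_ddQ_shift ha hd hq hb he (hdd' (2 * n))] at hIH

theorem stmt_3_general (q ω : ℂ) (hq0 : q ≠ 0) (hqω : q ≠ 1 ∨ ω ≠ 0)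
    (hqr : ∀ n : ℕ, 0 < n → q ^ n = 1 → q = 1)
    (a b c d e : ℂ) (φ ψ : Polynomial ℂ)
    (hφ : φ = C a * X ^ 2 + C b * X + C c) (hψ : ψ = C d * X + C e)
    (hne : φ ≠ 0 ∨ ψ ≠ 0)
    (Dstar : Polynomial ℂ →ₗ[ℂ] Polynomial ℂ) (hDstar : IsHahn q⁻¹ (-ω / q) Dstar)
    (u : PDual)
    (heq : hahnDual q Dstar (pMul φ u) = pMul ψ u)
    (hreg : IsRegularFunc u) :
    ∀ n : ℕ, ddQ q a d n ≠ 0 ∧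
      φ.eval (-(eeQ q ω a b d e n) / ddQ q a d (2 * n)) ≠ 0 := by
  obtain ⟨P, hP⟩ := hreg
  have hrs : q⁻¹ ≠ 1 ∨ -ω / q ≠ 0 := by simpa [hq0] using hqω
  have hpe := (hahnDual_pMul_eq_pMul_iff hq0).1 heq
  have hdd := ddQ_ne_zero hDstar hrs hφ hψ hpe hP hq0 hqr (ne_zero_of_pearson hq0 hpe hP hne)
  exact fun n => ⟨hdd n, eval_ne_zero_of_pearson hq0 hqr hDstar hrs n hφ hψ hpe hP hdd⟩

theorem stmt_3 (q ω : ℂ) (hq0 : q ≠ 0) (hqω : q ≠ 1 ∨ ω ≠ 0)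
    (hqr : ∀ n : ℕ, 0 < n → q ^ n = 1 → q = 1)
    (a b c d e : ℂ) (φ ψ : Polynomial ℂ)
    (hφ : φ = C a * X ^ 2 + C b * X + C c) (hψ : ψ = C d * X + C e)
    (hne : φ ≠ 0 ∨ ψ ≠ 0)
    (Dstar : Polynomial ℂ →ₗ[ℂ] Polynomial ℂ) (hDstar : IsHahn q⁻¹ (-ω / q) Dstar)
    (u : PDual) (hu : u ≠ 0)
    (heq : hahnDual q Dstar (pMul φ u) = pMul ψ u)
    (hreg : IsRegularFunc u) :
    ∀ n : ℕ, ddQ q a d n ≠ 0 ∧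
      φ.eval (-(eeQ q ω a b d e n) / ddQ q a d (2 * n)) ≠ 0 :=
  stmt_3_general q ω hq0 hqω hqr a b c d e φ ψ hφ hψ hne Dstar hDstar u heq hreg

end HahnOPSPaper
end
end

section
/- Let u be a linear functional on 𝒫 which is regular and satisfies D_{q,ω}(φu) = ψu, where φ has degree at most 2 and ψ has degree at most 1. If at least one of the polynomials φ and ψ is not the zero polynomial, then neither φ nor ψ is the zero polynomial and, moreover, deg ψ = 1. -/
/-!
Testing the Pearson equation `-q⁻¹⟨u, φ·D*f⟩ = ⟨u, ψ·f⟩` against suitable `f` gives everything.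
Since `q` is not a nontrivial root of unity, `D*` maps `xⁿ⁺¹` to a polynomial of degree exactly `n`,
so `D*` is onto `𝒫`. Hence `ψ = 0` would force `⟨u, φ·g⟩ = 0` for all `g`, and `φ = 0` would force
`⟨u, ψ·f⟩ = 0` for all `f`; for a regular `u` this only happens for the zero polynomial (pair the
polynomial with the orthogonal polynomial of its own degree). Finally `D* 1 = 0` gives `⟨u, ψ⟩ = 0`,
which rules out a nonzero constant `ψ` because `⟨u, 1⟩ ≠ 0`.
-/

open Polynomial

noncomputable section

namespace Polynomial

theorem degree_linear_pow_sub_X_pow {K : Type*} [Field K] {a b : K} {n : ℕ}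
    (ha : a ^ (n + 1) ≠ 1) : ((C a * X + C b) ^ (n + 1) - X ^ (n + 1)).degree = ↑(n + 1) := by
  refine degree_eq_of_le_of_coeff_ne_zero ?_ ?_
  · refine (degree_sub_le _ _).trans (max_le ?_ (degree_X_pow_le _))
    exact (degree_pow_le _ _).trans <| by
      grw [degree_linear_le]; norm_cast; simp
  · have hlin := coeff_pow_of_natDegree_le (m := n + 1) (natDegree_linear_le (a := a) (b := b))
    rw [mul_one] at hlin
    simpa [coeff_sub, hlin, sub_eq_zero] using ha

theorem degree_X_add_C_pow_sub_X_pow {R : Type*} [CommRing R] [NoZeroDivisors R] [CharZero R]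
    {b : R} (hb : b ≠ 0) (n : ℕ) : ((X + C b) ^ (n + 1) - X ^ (n + 1)).degree = (n : WithBot ℕ) := by
  refine degree_eq_of_le_of_coeff_ne_zero ?_ ?_
  · have hlt := degree_sub_lt_left (p := (X + C b) ^ (n + 1)) (q := X ^ (n + 1))
      (by rw [degree_X_pow, degree_pow, degree_X_add_C]; simp)
      ((monic_X_add_C b).pow (n + 1)).ne_zero (by simp)
    rw [degree_pow, degree_X_add_C] at hlt
    simp only [nsmul_eq_mul, mul_one, Nat.cast_add, Nat.cast_one] at hlt
    exact Order.le_of_lt_succ hlt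
  · simp [coeff_X_add_C_pow, hb, Nat.cast_add_one_ne_zero]

namespace Sequence

variable {K : Type*} [Field K] (S : Sequence K) {u : Module.Dual K K[X]}

theorem apply_mul_eq_zero_of_degree_lt (horth : ∀ m n, m ≠ n → u (S m * S n) = 0) {n : ℕ}
    {f : K[X]} (hf : f.degree < n) : u (f * S n) = 0 := by
  have hspan : f ∈ Submodule.span K (S '' Set.Iio n) := by
    rwa [S.span_degreeLT fun i _ ↦ (leadingCoeff_ne_zero.mpr (S.ne_zero i)).isUnit, mem_degreeLT]
  refine Submodule.span_le (p := LinearMap.ker (u ∘ₗ LinearMap.mulRight K (S n))) |>.mpr ?_ hspan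
  rintro _ ⟨i, hi, rfl⟩
  exact horth i n (Set.mem_Iio.mp hi).ne

theorem eq_zero_of_forall_apply_mul_eq_zero (horth : ∀ m n, m ≠ n → u (S m * S n) = 0)
    (hsq : ∀ n, u (S n ^ 2) ≠ 0) {χ : K[X]} (h : ∀ f, u (χ * f) = 0) : χ = 0 := by
  by_contra hχ
  set n := χ.natDegree
  set c := χ.leadingCoeff / (S n).leadingCoeff
  have hSn : (S n).leadingCoeff ≠ 0 := leadingCoeff_ne_zero.mpr (S.ne_zero n)
  have hc : c ≠ 0 := div_ne_zero (leadingCoeff_ne_zero.mpr hχ) hSn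
  have hrem : (χ - C c * S n).degree < n := by
    rw [← degree_eq_natDegree hχ]
    refine degree_sub_lt_left ?_ hχ ?_
    · rw [degree_C_mul hc, S.degree_eq, degree_eq_natDegree hχ]
    · rw [leadingCoeff_mul, leadingCoeff_C, div_mul_cancel₀ _ hSn]
  have : u (χ * S n) = c * u (S n ^ 2) := by
    rw [show χ * S n = (χ - C c * S n) * S n + c • S n ^ 2 by rw [smul_eq_C_mul]; ring,
      map_add, S.apply_mul_eq_zero_of_degree_lt horth hrem, map_smul, smul_eq_mul, zero_add]
  rw [h, eq_comm] at this
  exact mul_ne_zero hc (hsq n) this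

end Sequence

end Polynomial

namespace HahnOPSPaper

theorem IsRegularFunc.exists_sequence {u : PDual} (hu : IsRegularFunc u) :
    ∃ S : Sequence ℂ, (∀ m n, m ≠ n → u (S m * S n) = 0) ∧ ∀ n, u (S n ^ 2) ≠ 0 := by
  obtain ⟨P, hP, horth, hsq⟩ := hu
  exact ⟨⟨P, fun n ↦ by rw [degree_eq_natDegree (hP n).1.ne_zero, (hP n).2]⟩, horth, hsq⟩

theorem IsRegularFunc.apply_one_ne_zero {u : PDual} (hu : IsRegularFunc u) : u 1 ≠ 0 := by
  obtain ⟨P, hP, -, hsq⟩ := hu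
  simpa [(hP 0).1.natDegree_eq_zero.mp (hP 0).2] using hsq 0

theorem IsRegularFunc.eq_zero_of_forall_apply_mul_eq_zero {u : PDual} (hu : IsRegularFunc u)
    {χ : ℂ[X]} (h : ∀ f, u (χ * f) = 0) : χ = 0 :=
  let ⟨S, horth, hsq⟩ := hu.exists_sequence
  S.eq_zero_of_forall_apply_mul_eq_zero horth hsq h

theorem IsRegularFunc.natDegree_pos_of_apply_eq_zero {u : PDual} (hu : IsRegularFunc u)
    {χ : ℂ[X]} (hχ : χ ≠ 0) (h : u χ = 0) : 0 < χ.natDegree := by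
  by_contra! h0
  rw [eq_C_of_natDegree_eq_zero (Nat.le_zero.mp h0)] at h hχ
  rw [← mul_one (C _), ← smul_eq_C_mul, map_smul, smul_eq_mul] at h
  exact mul_ne_zero (C_ne_zero.mp hχ) hu.apply_one_ne_zero h

section Hahn

variable {Q Ω : ℂ} {D : ℂ[X] →ₗ[ℂ] ℂ[X]}

theorem hahn_multiplier_ne_zero (hQΩ : Q ≠ 1 ∨ Ω ≠ 0) : (C (Q - 1) * X + C Ω : ℂ[X]) ≠ 0 := by
  intro h
  have h1 := congrArg (coeff · 1) h
  have h0 := congrArg (coeff · 0) h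
  simp [sub_eq_zero] at h0 h1
  tauto

theorem IsHahn.map_one (hD : IsHahn Q Ω D) (hQΩ : Q ≠ 1 ∨ Ω ≠ 0) : D 1 = 0 := by
  have h := hD 1
  rw [one_comp, sub_self] at h
  exact (mul_eq_zero.mp h).resolve_left (hahn_multiplier_ne_zero hQΩ)

theorem IsHahn.degree_map_X_pow_succ (hD : IsHahn Q Ω D) (hQΩ : Q ≠ 1 ∨ Ω ≠ 0) {n : ℕ}
    (hroot : Q ^ (n + 1) = 1 → Q = 1) : (D (X ^ (n + 1))).degree = n := by
  have h := hD (X ^ (n + 1))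
  rw [X_pow_comp] at h
  by_cases hQ : Q = 1
  · subst hQ
    have hΩ : Ω ≠ 0 := hQΩ.resolve_left (not_not_intro rfl)
    rw [sub_self, C_0, zero_mul, zero_add, C_1, one_mul] at h
    rw [← degree_C_mul hΩ, h, degree_X_add_C_pow_sub_X_pow hΩ]
  · have h := congrArg degree h
    rw [degree_mul, degree_linear (sub_ne_zero.mpr hQ),
      degree_linear_pow_sub_X_pow fun h ↦ hQ (hroot h), add_comm, Nat.cast_add, Nat.cast_one] at h
    exact WithBot.add_right_cancel WithBot.one_ne_bot h

theorem IsHahn.surjective (hD : IsHahn Q Ω D) (hQΩ : Q ≠ 1 ∨ Ω ≠ 0)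
    (hroot : ∀ n : ℕ, 0 < n → Q ^ n = 1 → Q = 1) : Function.Surjective D := by
  let S : Sequence ℂ := ⟨fun n ↦ D (X ^ (n + 1)),
    fun n ↦ hD.degree_map_X_pow_succ hQΩ (hroot (n + 1) n.succ_pos)⟩
  have hspan := S.span fun n ↦ (leadingCoeff_ne_zero.mpr (S.ne_zero n)).isUnit
  rw [← LinearMap.range_eq_top, eq_top_iff, ← hspan, Submodule.span_le]
  rintro _ ⟨n, rfl⟩
  exact ⟨X ^ (n + 1), rfl⟩

end Hahn

theorem stmt_10_general (q ω : ℂ) (hq0 : q ≠ 0) (hqω : q ≠ 1 ∨ ω ≠ 0)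
    (hqr : ∀ n : ℕ, 0 < n → q ^ n = 1 → q = 1)
    (φ ψ : Polynomial ℂ) (hψ : ψ.natDegree ≤ 1)
    (Dstar : Polynomial ℂ →ₗ[ℂ] Polynomial ℂ) (hDstar : IsHahn q⁻¹ (-ω / q) Dstar)
    (u : PDual) (hreg : IsRegularFunc u)
    (heq : hahnDual q Dstar (pMul φ u) = pMul ψ u)
    (hne : φ ≠ 0 ∨ ψ ≠ 0) :
    φ ≠ 0 ∧ ψ ≠ 0 ∧ ψ.degree = 1 := by
  have hpearson (f : ℂ[X]) : -q⁻¹ * u (φ * Dstar f) = u (ψ * f) := by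
    simpa [hahnDual, pMul] using LinearMap.congr_fun heq f
  have hQΩ : q⁻¹ ≠ 1 ∨ -ω / q ≠ 0 := by
    refine hqω.imp (fun h ↦ by rwa [Ne, inv_eq_one]) fun h ↦ ?_
    exact div_ne_zero (neg_ne_zero.mpr h) hq0
  have hroot (n : ℕ) (hn : 0 < n) (h : q⁻¹ ^ n = 1) : q⁻¹ = 1 := by
    rw [inv_pow, inv_eq_one] at h
    rw [hqr n hn h, inv_one]
  have hψ0 : ψ ≠ 0 := by
    rintro rfl
    refine hne.resolve_right (not_not_intro rfl) (hreg.eq_zero_of_forall_apply_mul_eq_zero ?_)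
    intro f
    obtain ⟨g, rfl⟩ := hDstar.surjective hQΩ hroot f
    simpa [hq0] using hpearson g
  have hφ0 : φ ≠ 0 := by
    rintro rfl
    exact hψ0 (hreg.eq_zero_of_forall_apply_mul_eq_zero fun f ↦ by simpa using (hpearson f).symm)
  have huψ : u ψ = 0 := by simpa [hDstar.map_one hQΩ] using (hpearson 1).symm
  have hdeg := hreg.natDegree_pos_of_apply_eq_zero hψ0 huψ
  exact ⟨hφ0, hψ0, (degree_eq_iff_natDegree_eq hψ0).mpr (by omega : ψ.natDegree = 1)⟩

theorem stmt_10 (q ω : ℂ) (hq0 : q ≠ 0) (hqω : q ≠ 1 ∨ ω ≠ 0)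
    (hqr : ∀ n : ℕ, 0 < n → q ^ n = 1 → q = 1)
    (φ ψ : Polynomial ℂ) (hφ : φ.natDegree ≤ 2) (hψ : ψ.natDegree ≤ 1)
    (Dstar : Polynomial ℂ →ₗ[ℂ] Polynomial ℂ) (hDstar : IsHahn q⁻¹ (-ω / q) Dstar)
    (u : PDual) (hreg : IsRegularFunc u)
    (heq : hahnDual q Dstar (pMul φ u) = pMul ψ u)
    (hne : φ ≠ 0 ∨ ψ ≠ 0) :
    φ ≠ 0 ∧ ψ ≠ 0 ∧ ψ.degree = 1 :=
  stmt_10_general q ω hq0 hqω hqr φ ψ hψ Dstar hDstar u hreg heq hne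

end HahnOPSPaper
end
end
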